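/- arXiv:1806.06924 — 3 statements merged into one kernel-verified Lean document; each statement's English description precedes it below -/
import Mathlib

section
/- Even the space D_1^L of persistence diagrams with at most one point contained in [−L,L]², equipped with the bottleneck distance d_∞, admits no bi-Lipschitz embedding into ℝⁿ for any n ∈ ℕ. -/
open scoped ENNReal

noncomputable section

/-- The `ℓ∞` distance of a point of the plane to the diagonal `Δ = {(x,x)}`. -/
def distDelta (q : ℝ × ℝ) : ℝ := (q.2 - q.1) / 2

/-- A partial matching between two finite multisets of points of the plane:
a multiset of pairs whose first (resp. second) coordinates form a sub-multiset
of `D₁` (resp. `D₂`); unmatched points will be matched to the diagonal. -/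
def IsMatching (P : Multiset ((ℝ × ℝ) × (ℝ × ℝ))) (D₁ D₂ : Multiset (ℝ × ℝ)) : Prop :=
  P.map Prod.fst ≤ D₁ ∧ P.map Prod.snd ≤ D₂

/-- The `p`-cost of a partial matching (for finite `p`): `p`-th root of the sum of the
`p`-th powers of the `ℓ∞` distances between matched points and of the `ℓ∞` distances
to the diagonal of unmatched points.  (Note: `dist` on `ℝ × ℝ` is the `ℓ∞` distance.) -/
def costP (p : ℕ) (P : Multiset ((ℝ × ℝ) × (ℝ × ℝ))) (D₁ D₂ : Multiset (ℝ × ℝ)) : ℝ :=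
  (((P.map fun ab => dist ab.1 ab.2 ^ p).sum
      + ((D₁ - P.map Prod.fst).map fun q => distDelta q ^ p).sum)
      + ((D₂ - P.map Prod.snd).map fun q => distDelta q ^ p).sum) ^ ((p : ℝ)⁻¹)

/-- The `∞`-cost (bottleneck cost) of a partial matching: the maximum of the `ℓ∞`
distances between matched points and of the `ℓ∞` distances to the diagonal of
unmatched points. -/
def costInf (P : Multiset ((ℝ × ℝ) × (ℝ × ℝ))) (D₁ D₂ : Multiset (ℝ × ℝ)) : ℝ :=
  max ((P.map fun ab => dist ab.1 ab.2).fold max 0)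
    (max (((D₁ - P.map Prod.fst).map distDelta).fold max 0)
      (((D₂ - P.map Prod.snd).map distDelta).fold max 0))

/-- The `p`-diagram distance, `p ∈ ℕ ∪ {∞}`: the infimum of the costs of partial
matchings between the two diagrams. -/
def diagramDist (p : ℕ∞) (D₁ D₂ : Multiset (ℝ × ℝ)) : ℝ :=
  sInf {c : ℝ | ∃ P, IsMatching P D₁ D₂ ∧
    c = WithTop.recTopCoe (costInf P D₁ D₂) (fun q => costP q P D₁ D₂) p}

/-- The space of persistence diagrams with at most `N` points, all contained in
`[-L,L]²` (and lying strictly above the diagonal). -/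
def DiagNL (N : ℕ) (L : ℝ) : Type :=
  {D : Multiset (ℝ × ℝ) // D.card ≤ N ∧
    ∀ q ∈ D, q.1 < q.2 ∧ -L ≤ q.1 ∧ q.1 ≤ L ∧ -L ≤ q.2 ∧ q.2 ≤ L}

/-!
For `δ = L / (k + 1)` the `k` one-point diagrams `{(-L + δ i, -L + δ (i + 2))}`, `i < k`, are
pairwise at bottleneck distance exactly `δ`: matching either point to the diagonal costs `δ`,
while matching them to each other costs at least `δ`. Under a bi-Lipschitz map into `ℝⁿ` they
become, after rescaling by `(A δ)⁻¹`, a `1`-separated family in a ball of radius `B / A`, whose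
size is bounded by the size of a finite `1/2`-net of that ball, independently of `k`.
-/

section Packing

theorem TotallyBounded.exists_natCard_le_of_pairwise_le_dist {X : Type*} [PseudoMetricSpace X]
    {s : Set X} (hs : TotallyBounded s) {ε : ℝ} (hε : 0 < ε) :
    ∃ N : ℕ, ∀ {ι : Type*} (f : ι → X), (∀ i, f i ∈ s) →
      Pairwise (fun i j => ε ≤ dist (f i) (f j)) → Nat.card ι ≤ N := by
  obtain ⟨t, ht, hst⟩ := Metric.totallyBounded_iff.1 hs (ε / 2) (half_pos hε)
  have : Finite t := ht.to_subtype
  refine ⟨Nat.card t, fun f hfs hsep => ?_⟩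
  have hcenter : ∀ i, ∃ c : t, dist (f i) c < ε / 2 := fun i => by
    obtain ⟨c, hc, hfc⟩ := Set.mem_iUnion₂.1 (hst (hfs i))
    exact ⟨⟨c, hc⟩, hfc⟩
  choose c hc using hcenter
  refine Nat.card_le_card_of_injective c fun i j hij => ?_
  by_contra hne
  have hci := hc i
  rw [hij] at hci
  have hclose : dist (f i) (f j) < ε :=
    calc dist (f i) (f j) ≤ dist (f i) (c j) + dist (f j) (c j) := dist_triangle_right _ _ _
      _ < ε := by linarith [hc j]
  exact (hsep hne).not_gt hclose

variable {E : Type*} [NormedAddCommGroup E] [NormedSpace ℝ E] [ProperSpace E]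

theorem exists_natCard_le_of_pairwise_dist_mem_Icc (C : ℝ) :
    ∃ N : ℕ, ∀ {ι : Type*} (f : ι → E) {r : ℝ}, 0 < r →
      Pairwise (fun i j => r ≤ dist (f i) (f j)) → (∀ i j, dist (f i) (f j) ≤ C * r) →
      Nat.card ι ≤ N := by
  obtain ⟨N, hN⟩ :=
    (isCompact_closedBall (0 : E) C).totallyBounded.exists_natCard_le_of_pairwise_le_dist one_pos
  refine ⟨N, fun {ι} f r hr hsep hbdd => ?_⟩
  rcases isEmpty_or_nonempty ι with hι | ⟨⟨i₀⟩⟩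
  · simp
  set g : ι → E := fun i => r⁻¹ • (f i - f i₀)
  have hg : ∀ i j, dist (g i) (g j) = r⁻¹ * dist (f i) (f j) := fun i j => by
    rw [dist_smul₀, dist_sub_right, Real.norm_of_nonneg (inv_nonneg.2 hr.le)]
  refine hN g (fun i => ?_) (fun i j hij => ?_)
  · have hgi₀ : g i₀ = 0 := by simp [g]
    rw [Metric.mem_closedBall, ← hgi₀, hg, inv_mul_le_iff₀ hr, mul_comm]
    exact hbdd i i₀
  · change 1 ≤ dist (g i) (g j)
    rw [hg, le_inv_mul_iff₀ hr, mul_one]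
    exact hsep hij

end Packing

section SingletonDiagrams

variable {p q : ℝ × ℝ} {P : Multiset ((ℝ × ℝ) × (ℝ × ℝ))}

theorem IsMatching.eq_zero_or_eq_singleton (h : IsMatching P {p} {q}) :
    P = 0 ∨ P = {(p, q)} := by
  obtain ⟨hfst, hsnd⟩ := h
  rcases Multiset.le_singleton.1 hfst with hP | hP
  · exact .inl (Multiset.map_eq_zero.1 hP)
  · obtain ⟨a, rfl, rfl⟩ := Multiset.map_eq_singleton.1 hP
    have : a.2 = q := by simpa using hsnd
    exact .inr (by rw [← this])

theorem costInf_zero_singleton (hp : 0 ≤ distDelta p) (hq : 0 ≤ distDelta q) :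
    costInf 0 {p} {q} = max (distDelta p) (distDelta q) := by
  simp [costInf, Multiset.fold_singleton, hp, hq]

theorem costInf_singleton_singleton : costInf {(p, q)} {p} {q} = dist p q := by
  simp [costInf, Multiset.fold_singleton]

theorem diagramDist_top_singleton (hp : 0 ≤ distDelta p) (hq : 0 ≤ distDelta q) :
    diagramDist ⊤ {p} {q} = min (dist p q) (max (distDelta p) (distDelta q)) := by
  rw [min_comm, ← csInf_pair, diagramDist]
  congr 1
  ext c
  simp only [Set.mem_ofPred_eq, Set.mem_insert_iff, Set.mem_singleton_iff]
  constructor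
  · rintro ⟨P, hP, rfl⟩
    rcases hP.eq_zero_or_eq_singleton with rfl | rfl
    · exact .inl (costInf_zero_singleton hp hq)
    · exact .inr costInf_singleton_singleton
  · rintro (rfl | rfl)
    · exact ⟨0, by simp [IsMatching], (costInf_zero_singleton hp hq).symm⟩
    · exact ⟨{(p, q)}, by simp [IsMatching], costInf_singleton_singleton.symm⟩

end SingletonDiagrams

theorem exists_pairwise_diagramDist_eq {N : ℕ} (hN : 1 ≤ N) {L : ℝ} (hL : 0 < L) (k : ℕ) :
    ∃ (D : Fin k → DiagNL N L) (δ : ℝ), 0 < δ ∧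
      Pairwise fun i j => diagramDist ⊤ (D i).1 (D j).1 = δ := by
  set δ := L / (k + 1)
  have hδ : 0 < δ := by positivity
  let p : Fin k → ℝ × ℝ := fun i => (-L + δ * i, -L + δ * (i + 2))
  have hp : ∀ i, (p i).1 < (p i).2 ∧ -L ≤ (p i).1 ∧ (p i).1 ≤ L ∧ -L ≤ (p i).2 ∧ (p i).2 ≤ L := by
    intro i
    have hi : (i : ℝ) + 1 ≤ k := by exact_mod_cast i.2
    have hδk : δ * (k + 1) = L := div_mul_cancel₀ _ (by positivity)
    simp only [p]
    refine ⟨by linarith, le_add_of_nonneg_right (by positivity), by nlinarith, by nlinarith,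
      by nlinarith⟩
  have hΔ : ∀ i, distDelta (p i) = δ := fun i => by simp only [distDelta, p]; ring
  have hsep : ∀ i j, i ≠ j → δ ≤ dist (p i) (p j) := by
    intro i j hij
    have hij' : (1 : ℝ) ≤ |(i : ℝ) - j| := by
      exact_mod_cast Int.one_le_abs (sub_ne_zero.2 (by omega : (i : ℤ) ≠ j))
    calc δ ≤ δ * |(i : ℝ) - j| := le_mul_of_one_le_right hδ.le hij'
      _ = dist (p i).1 (p j).1 := by
        rw [Real.dist_eq, show (p i).1 - (p j).1 = δ * ((i : ℝ) - j) by simp only [p]; ring,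
          abs_mul, abs_of_pos hδ]
      _ ≤ dist (p i) (p j) := le_max_left _ _
  refine ⟨fun i => ⟨{p i}, by simpa using hN, by simpa using hp i⟩, δ, hδ, fun i j hij => ?_⟩
  change diagramDist ⊤ {p i} {p j} = δ
  rw [diagramDist_top_singleton ((hΔ i).symm ▸ hδ.le) ((hΔ j).symm ▸ hδ.le), hΔ, hΔ, max_self]
  exact min_eq_right (hsep i j hij)

/-- Even the space `D_1^L` of persistence diagrams with at most one point contained in
`[-L,L]²`, equipped with the bottleneck distance `d_∞`, admits no bi-Lipschitz
embedding into `ℝⁿ`, for any `n`. -/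
theorem no_biLipschitz_Diag1L_into_Rn (n : ℕ) (L : ℝ) (hL : 0 < L) :
    ¬ ∃ (Φ : DiagNL 1 L → EuclideanSpace ℝ (Fin n)) (A B : ℝ), 0 < A ∧ 0 < B ∧
      ∀ D D' : DiagNL 1 L,
        A * diagramDist ⊤ D.1 D'.1 ≤ dist (Φ D) (Φ D') ∧
        dist (Φ D) (Φ D') ≤ B * diagramDist ⊤ D.1 D'.1 := by
  rintro ⟨Φ, A, B, hA, hB, hΦ⟩
  obtain ⟨N, hN⟩ :=
    exists_natCard_le_of_pairwise_dist_mem_Icc (E := EuclideanSpace ℝ (Fin n)) (B / A)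
  obtain ⟨D, δ, hδ, hD⟩ := exists_pairwise_diagramDist_eq le_rfl hL (N + 1)
  have hBδ : B / A * (A * δ) = B * δ := by field_simp
  have hcard := hN (Φ ∘ D) (r := A * δ) (by positivity)
    (fun i j hij => by simpa only [Function.comp, hD hij] using (hΦ (D i) (D j)).1)
    (fun i j => by
      rw [hBδ]
      rcases eq_or_ne i j with rfl | hij
      · rw [dist_self]
        positivity
      · simpa only [Function.comp, hD hij] using (hΦ (D i) (D j)).2)
  simp at hcard

end
end

section
/- In the space of persistence diagrams with the bottleneck distance d_∞, geodesics between two diagrams need not be unique; consequently, there is no isometric embedding of the space of persistence diagrams (with d_∞) into any Hilbert space. -/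
open scoped ENNReal

noncomputable section

/-- The space of (finite) persistence diagrams: finite multisets of points strictly
above the diagonal. -/
def Diag : Type := {D : Multiset (ℝ × ℝ) // ∀ q ∈ D, q.1 < q.2}

/- ### Auxiliary material -/

lemma matching_snd_singleton {P : Multiset ((ℝ×ℝ)×(ℝ×ℝ))} {D₁ : Multiset (ℝ×ℝ)} {b : ℝ×ℝ}
    (h : IsMatching P D₁ {b}) : P = 0 ∨ ∃ a ∈ D₁, P = {(a, b)} := by
  rcases Multiset.le_singleton.1 h.2 with h2 | h2
  · left; exact Multiset.map_eq_zero.1 h2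
  · right
    have hc : Multiset.card P = 1 := by
      have := congrArg Multiset.card h2; simpa using this
    obtain ⟨p, rfl⟩ := Multiset.card_eq_one.1 hc
    have hb : p.2 = b := by simpa using h2
    have ha : p.1 ∈ D₁ := by
      have := h.1; simp only [Multiset.map_singleton, Multiset.singleton_le] at this; exact this
    exact ⟨p.1, ha, by rw [← hb]⟩

lemma matching_fst_singleton {P : Multiset ((ℝ×ℝ)×(ℝ×ℝ))} {D₂ : Multiset (ℝ×ℝ)} {a : ℝ×ℝ}
    (h : IsMatching P {a} D₂) : P = 0 ∨ ∃ b ∈ D₂, P = {(a, b)} := by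
  rcases Multiset.le_singleton.1 h.1 with h2 | h2
  · left; exact Multiset.map_eq_zero.1 h2
  · right
    have hc : Multiset.card P = 1 := by
      have := congrArg Multiset.card h2; simpa using this
    obtain ⟨p, rfl⟩ := Multiset.card_eq_one.1 hc
    have hb : p.1 = a := by simpa using h2
    have ha : p.2 ∈ D₂ := by
      have := h.2; simp only [Multiset.map_singleton, Multiset.singleton_le] at this; exact this
    exact ⟨p.2, ha, by rw [← hb]⟩

lemma diagramDist_top_eq {D₁ D₂ : Multiset (ℝ×ℝ)} {v : ℝ}
    (P₀ : Multiset ((ℝ×ℝ)×(ℝ×ℝ))) (h₀ : IsMatching P₀ D₁ D₂) (hc : costInf P₀ D₁ D₂ = v)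
    (hlb : ∀ P, IsMatching P D₁ D₂ → v ≤ costInf P D₁ D₂) :
    diagramDist ⊤ D₁ D₂ = v := by
  have hmem : v ∈ {c : ℝ | ∃ P, IsMatching P D₁ D₂ ∧
      c = WithTop.recTopCoe (costInf P D₁ D₂) (fun q => costP q P D₁ D₂) (⊤ : ℕ∞)} :=
    ⟨P₀, h₀, hc.symm⟩
  refine le_antisymm (csInf_le ⟨v, ?_⟩ hmem) (le_csInf ⟨v, hmem⟩ ?_) <;>
  · rintro c ⟨P, hP, rfl⟩
    exact hlb P hP

-- notation for our concrete points
local notation "pa" => (((0:ℝ), (2:ℝ)) : ℝ × ℝ)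
local notation "pm" => (((1:ℝ)/2, (3:ℝ)/2) : ℝ × ℝ)
local notation "pe" => (((0:ℝ), (1:ℝ)/2) : ℝ × ℝ)

lemma matching_left_zero {P : Multiset ((ℝ×ℝ)×(ℝ×ℝ))} {D₂ : Multiset (ℝ×ℝ)}
    (h : IsMatching P 0 D₂) : P = 0 := by
  have := h.1
  simpa [Multiset.le_zero, Multiset.map_eq_zero] using this

lemma dist_xy : diagramDist ⊤ (0 : Multiset (ℝ×ℝ)) {pa} = 1 := by
  refine diagramDist_top_eq 0 ⟨by simp, by simp⟩ ?_ ?_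
  · simp [costInf, distDelta, Multiset.fold_singleton] <;> norm_num
  · intro P hP
    rw [matching_left_zero hP]
    simp [costInf, distDelta, Multiset.fold_singleton] <;> norm_num

lemma dist_xm₁ : diagramDist ⊤ (0 : Multiset (ℝ×ℝ)) {pm} = 1/2 := by
  refine diagramDist_top_eq 0 ⟨by simp, by simp⟩ ?_ ?_
  · simp [costInf, distDelta, Multiset.fold_singleton]; norm_num
  · intro P hP
    rw [matching_left_zero hP]
    simp [costInf, distDelta, Multiset.fold_singleton] <;> norm_num

lemma dist_xm₂ : diagramDist ⊤ (0 : Multiset (ℝ×ℝ)) ({pm, pe} : Multiset (ℝ×ℝ)) = 1/2 := by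
  refine diagramDist_top_eq 0 ⟨by simp, by simp⟩ ?_ ?_
  · simp [costInf, distDelta, Multiset.fold_singleton, Multiset.insert_eq_cons]
    norm_num
  · intro P hP
    rw [matching_left_zero hP]
    simp [costInf, distDelta, Multiset.fold_singleton, Multiset.insert_eq_cons]
    norm_num

lemma dist_m₁y : diagramDist ⊤ ({pm} : Multiset (ℝ×ℝ)) {pa} = 1/2 := by
  refine diagramDist_top_eq {(pm, pa)} ⟨by simp, by simp⟩ ?_ ?_
  · simp [costInf, distDelta, Multiset.fold_singleton, Prod.dist_eq, Real.dist_eq]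
    norm_num [abs_of_nonneg]
  · intro P hP
    rcases matching_snd_singleton hP with rfl | ⟨a, ha, rfl⟩
    · simp [costInf, distDelta, Multiset.fold_singleton]
      norm_num
    · rw [Multiset.mem_singleton] at ha
      subst ha
      simp [costInf, distDelta, Multiset.fold_singleton, Prod.dist_eq, Real.dist_eq]

lemma dist_m₂y : diagramDist ⊤ ({pm, pe} : Multiset (ℝ×ℝ)) {pa} = 1/2 := by
  refine diagramDist_top_eq {(pm, pa)} ?_ ?_ ?_
  · constructor
    · rw [Multiset.map_singleton]
      exact Multiset.singleton_le.2 (by simp)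
    · simp
  · simp [costInf, distDelta, Multiset.fold_singleton, Prod.dist_eq, Real.dist_eq,
      Multiset.insert_eq_cons, Multiset.sub_cons, Multiset.erase_cons_head]
    norm_num [abs_of_nonneg]
  · intro P hP
    rcases matching_snd_singleton hP with rfl | ⟨a, ha, rfl⟩
    · simp [costInf, distDelta, Multiset.fold_singleton, Multiset.insert_eq_cons]
      norm_num
    · rw [Multiset.insert_eq_cons, Multiset.mem_cons, Multiset.mem_singleton] at ha
      rcases ha with rfl | rfl
      · simp [costInf, distDelta, Multiset.fold_singleton, Prod.dist_eq, Real.dist_eq,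
          Multiset.insert_eq_cons, Multiset.sub_cons, Multiset.erase_cons_head]
      · refine le_trans ?_ (le_max_left _ _)
        simp [Multiset.fold_singleton, Prod.dist_eq, Real.dist_eq]
        norm_num [abs_of_nonneg, le_max_iff]

lemma dist_m₁m₂ : diagramDist ⊤ ({pm} : Multiset (ℝ×ℝ)) ({pm, pe} : Multiset (ℝ×ℝ)) = 1/4 := by
  refine diagramDist_top_eq {(pm, pm)} ?_ ?_ ?_
  · constructor
    · simp
    · rw [Multiset.map_singleton]
      exact Multiset.singleton_le.2 (by simp)
  · simp [costInf, distDelta, Multiset.fold_singleton, Prod.dist_eq, Real.dist_eq,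
      Multiset.insert_eq_cons, Multiset.sub_cons, Multiset.erase_cons_head]
    norm_num
  · intro P hP
    rcases matching_fst_singleton hP with rfl | ⟨b, hb, rfl⟩
    · simp [costInf, distDelta, Multiset.fold_singleton, Multiset.insert_eq_cons]
      norm_num
    · rw [Multiset.insert_eq_cons, Multiset.mem_cons, Multiset.mem_singleton] at hb
      rcases hb with rfl | rfl
      · simp [costInf, distDelta, Multiset.fold_singleton, Prod.dist_eq, Real.dist_eq,
          Multiset.insert_eq_cons, Multiset.sub_cons, Multiset.erase_cons_head]
        norm_num
      · refine le_trans ?_ (le_max_left _ _)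
        simp [Multiset.fold_singleton, Prod.dist_eq, Real.dist_eq]
        norm_num [abs_of_nonneg, le_max_iff]

def DX : Diag := ⟨0, by intro q hq; simp at hq⟩
def DY : Diag := ⟨{pa}, by intro q hq; rw [Multiset.mem_singleton] at hq; subst hq; norm_num⟩
def DM₁ : Diag := ⟨{pm}, by intro q hq; rw [Multiset.mem_singleton] at hq; subst hq; norm_num⟩
def DM₂ : Diag := ⟨{pm, pe}, by
  intro q hq
  rw [Multiset.insert_eq_cons, Multiset.mem_cons, Multiset.mem_singleton] at hq
  rcases hq with rfl | rfl <;> norm_num⟩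

lemma DM_ne : DM₁ ≠ DM₂ := by
  intro h
  have := congrArg (fun d : Diag => Multiset.card d.1) h
  simp [DM₁, DM₂, Multiset.insert_eq_cons] at this

/-- In the space of persistence diagrams with the bottleneck distance `d_∞`,
geodesics need not be unique: there are diagrams `x ≠ y` with two distinct midpoints.
Consequently, there is no isometric embedding of the space of persistence diagrams
(with `d_∞`) into any (real) Hilbert space. -/
theorem midpoints_not_unique_and_no_isometric_embedding :
    (∃ x y m₁ m₂ : Diag, m₁ ≠ m₂ ∧
      diagramDist ⊤ x.1 m₁.1 = diagramDist ⊤ x.1 y.1 / 2 ∧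
      diagramDist ⊤ m₁.1 y.1 = diagramDist ⊤ x.1 y.1 / 2 ∧
      diagramDist ⊤ x.1 m₂.1 = diagramDist ⊤ x.1 y.1 / 2 ∧
      diagramDist ⊤ m₂.1 y.1 = diagramDist ⊤ x.1 y.1 / 2) ∧
    ∀ (H : Type) [NormedAddCommGroup H] [InnerProductSpace ℝ H] [CompleteSpace H],
      ¬ ∃ Φ : Diag → H, ∀ x y : Diag, dist (Φ x) (Φ y) = diagramDist ⊤ x.1 y.1 := by
  constructor
  · refine ⟨DX, DY, DM₁, DM₂, DM_ne, ?_, ?_, ?_, ?_⟩ <;>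
      simp only [DX, DY, DM₁, DM₂] <;>
      rw [dist_xy] <;> norm_num <;>
      first
        | exact dist_xm₁
        | exact dist_m₁y
        | exact dist_xm₂
        | exact dist_m₂y
  · intro H _ _ _ ⟨Φ, hΦ⟩
    have hxy : diagramDist ⊤ DX.1 DY.1 = 1 := dist_xy
    have dxm₁ : diagramDist ⊤ DX.1 DM₁.1 = 1/2 := dist_xm₁
    have dm₁y : diagramDist ⊤ DM₁.1 DY.1 = 1/2 := dist_m₁y
    have dxm₂ : diagramDist ⊤ DX.1 DM₂.1 = 1/2 := dist_xm₂
    have dm₂y : diagramDist ⊤ DM₂.1 DY.1 = 1/2 := dist_m₂y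
    have dmm : diagramDist ⊤ DM₁.1 DM₂.1 = 1/4 := dist_m₁m₂
    have h1 : dist (Φ DX) (Φ DM₁) = dist (Φ DX) (Φ DY) / 2 := by
      rw [hΦ, hΦ, hxy, dxm₁]
    have h1' : dist (Φ DM₁) (Φ DY) = dist (Φ DX) (Φ DY) / 2 := by
      rw [hΦ, hΦ, hxy, dm₁y]
    have h2 : dist (Φ DX) (Φ DM₂) = dist (Φ DX) (Φ DY) / 2 := by
      rw [hΦ, hΦ, hxy, dxm₂]
    have h2' : dist (Φ DM₂) (Φ DY) = dist (Φ DX) (Φ DY) / 2 := by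
      rw [hΦ, hΦ, hxy, dm₂y]
    have e1 : Φ DM₁ = midpoint ℝ (Φ DX) (Φ DY) := eq_midpoint_of_dist_eq_half h1 h1'
    have e2 : Φ DM₂ = midpoint ℝ (Φ DX) (Φ DY) := eq_midpoint_of_dist_eq_half h2 h2'
    have : dist (Φ DM₁) (Φ DM₂) = 0 := by rw [e1, e2, dist_self]
    rw [hΦ, dmm] at this
    norm_num at this

end
end

section
/- Each diagram Dg'_j = {(−L + jr, −L + (j+1)r)}, 0 ≤ j ≤ M−1, r = 2L/M, satisfies d_p(∅, Dg'_j) = r/2 < r for all p ∈ ℕ ∪ {∞}, and moreover no open d_p-ball of radius β·r with β = 1/2 can contain two distinct diagrams Dg'_j, Dg'_{j'}. Hence any cover of the open ball B_p(∅, r) in D_N^L by open balls of radius at most r/2 requires at least M balls. -/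
open scoped ENNReal

noncomputable section

/-- The single-point diagram `Dg'_j = {(−L + j·r, −L + (j+1)·r)}`. -/
def Dg' (L r : ℝ) (j : ℕ) : Multiset (ℝ × ℝ) := {(-L + (j : ℝ) * r, -L + ((j : ℝ) + 1) * r)}

/-- The empty persistence diagram, as an element of `D_N^L`. -/
def emptyDiag (N : ℕ) (L : ℝ) : DiagNL N L := ⟨0, by simp [DiagNL]⟩

/-- The open ball of center `x` and radius `r` for a distance function `d`. -/
def ballD {X : Type*} (d : X → X → ℝ) (x : X) (r : ℝ) : Set X := {y | d x y < r}

/-!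
A point `q` at height `ρ` above the diagonal can only come `d_1`-closer than `ρ` to a diagram `C`
through a matching that pairs `q` with some `c ∈ C`, at cost `dist c q` plus the diagonal costs
of the other points of `C`. Two such points `q, q'` at distance `≥ 2ρ` cannot both be that close
to `C`: pairing both with the same `c` contradicts the triangle inequality, while pairing them
with `c ≠ c'` leaves `c'` (resp. `c`) unmatched, and `distDelta` is `1`-Lipschitz. The diagrams
`Dg'_j` lie in `B_1(∅, r)` and are pairwise `r` apart, so each needs its own ball of radius `r/2`.
-/

lemma distDelta_le_add_dist (c q : ℝ × ℝ) : distDelta q ≤ distDelta c + dist c q := by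
  have h₁ : |c.1 - q.1| ≤ dist c q := (Real.dist_eq _ _).symm.trans_le (le_max_left _ _)
  have h₂ : |c.2 - q.2| ≤ dist c q := (Real.dist_eq _ _).symm.trans_le (le_max_right _ _)
  unfold distDelta
  linarith [le_abs_self (c.1 - q.1), neg_abs_le (c.2 - q.2)]

lemma sum_map_distDelta_nonneg {s : Multiset (ℝ × ℝ)} (hs : ∀ x ∈ s, 0 ≤ distDelta x) :
    0 ≤ (s.map distDelta).sum :=
  Multiset.sum_nonneg (Multiset.forall_mem_map_iff.mpr hs)

lemma distDelta_nonneg_of_mem {N : ℕ} {L : ℝ} (C : DiagNL N L) {x : ℝ × ℝ} (hx : x ∈ C.1) :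
    0 ≤ distDelta x := by
  unfold distDelta
  linarith [(C.2.2 x hx).1]

lemma diagramDist_zero_left (p : ℕ∞) (D : Multiset (ℝ × ℝ)) :
    diagramDist p 0 D = WithTop.recTopCoe (costInf 0 0 D) (fun q => costP q 0 0 D) p := by
  have hP : ∀ P, IsMatching P 0 D ↔ P = 0 := fun P =>
    ⟨fun h => Multiset.map_eq_zero.mp (Multiset.le_zero.mp h.1), fun h => by simp [h, IsMatching]⟩
  simp only [diagramDist, hP, exists_eq_left, Set.ofPred_eq_eq_singleton, csInf_singleton]

lemma diagramDist_zero_singleton {p : ℕ∞} (hp : 1 ≤ p) {q : ℝ × ℝ} (hq : 0 ≤ distDelta q) :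
    diagramDist p 0 {q} = distDelta q := by
  rw [diagramDist_zero_left]
  cases p with
  | top =>
    change costInf 0 0 {q} = _
    simpa [costInf, Multiset.fold_singleton, max_eq_left hq] using hq
  | coe n =>
    have hn : n ≠ 0 := by rintro rfl; simp at hp
    simp [WithTop.recTopCoe, costP, Real.pow_rpow_inv_natCast hq hn]

lemma costP_one (P : Multiset ((ℝ × ℝ) × (ℝ × ℝ))) (D₁ D₂ : Multiset (ℝ × ℝ)) :
    costP 1 P D₁ D₂ = (P.map fun ab => dist ab.1 ab.2).sum
      + ((D₁ - P.map Prod.fst).map distDelta).sum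
      + ((D₂ - P.map Prod.snd).map distDelta).sum := by
  simp [costP]

lemma exists_mem_matched_of_diagramDist_one_singleton_lt {C : Multiset (ℝ × ℝ)}
    (hC : ∀ c ∈ C, 0 ≤ distDelta c) {q : ℝ × ℝ} {ε : ℝ} (hε : ε ≤ distDelta q)
    (h : diagramDist 1 C {q} < ε) :
    ∃ c ∈ C, dist c q + ((C.erase c).map distDelta).sum < ε := by
  obtain ⟨_, ⟨P, ⟨hP₁, hP₂⟩, rfl⟩, hcost⟩ := exists_lt_of_csInf_lt
    (by exact ⟨_, 0, ⟨by simp, by simp⟩, rfl⟩) h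
  change costP 1 P C {q} < ε at hcost
  rw [costP_one] at hcost
  rcases Multiset.le_singleton.mp hP₂ with hP | hP
  · obtain rfl : P = 0 := Multiset.map_eq_zero.mp hP
    simp only [Multiset.map_zero, Multiset.sum_zero, Multiset.sub_zero, zero_add,
      Multiset.map_singleton, Multiset.sum_singleton] at hcost
    linarith [sum_map_distDelta_nonneg hC]
  · obtain ⟨ab, rfl⟩ := Multiset.card_eq_one.mp (by simpa using congrArg Multiset.card hP)
    obtain rfl : ab.2 = q := by simpa using hP
    refine ⟨ab.1, Multiset.singleton_le.mp (by simpa using hP₁), ?_⟩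
    simpa using hcost

lemma not_diagramDist_one_singleton_lt_and_lt {C : Multiset (ℝ × ℝ)}
    (hC : ∀ c ∈ C, 0 ≤ distDelta c) {q q' : ℝ × ℝ} {ρ : ℝ} (hq : ρ ≤ distDelta q)
    (hq' : ρ ≤ distDelta q') (hqq' : 2 * ρ ≤ dist q q') :
    ¬ (diagramDist 1 C {q} < ρ ∧ diagramDist 1 C {q'} < ρ) := by
  rintro ⟨h, h'⟩
  obtain ⟨c, hc, hcq⟩ := exists_mem_matched_of_diagramDist_one_singleton_lt hC hq h
  obtain ⟨c', hc', hcq'⟩ := exists_mem_matched_of_diagramDist_one_singleton_lt hC hq' h'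
  have hC_erase : ∀ a, ∀ x ∈ C.erase a, 0 ≤ distDelta x :=
    fun a x hx => hC x (Multiset.mem_of_mem_erase hx)
  by_cases hcc' : c = c'
  · subst hcc'
    linarith [dist_triangle_left q q' c, sum_map_distDelta_nonneg (hC_erase c)]
  · have h₁ : distDelta c' ≤ ((C.erase c).map distDelta).sum :=
      Multiset.single_le_sum (Multiset.forall_mem_map_iff.mpr (hC_erase c))
        _ (Multiset.mem_map_of_mem _ ((Multiset.mem_erase_of_ne (Ne.symm hcc')).mpr hc'))
    have h₂ : distDelta c ≤ ((C.erase c').map distDelta).sum :=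
      Multiset.single_le_sum (Multiset.forall_mem_map_iff.mpr (hC_erase c'))
        _ (Multiset.mem_map_of_mem _ ((Multiset.mem_erase_of_ne hcc').mpr hc))
    linarith [distDelta_le_add_dist c q, distDelta_le_add_dist c' q']

section Dg'

variable (L r : ℝ)

def dgPoint (j : ℕ) : ℝ × ℝ := (-L + (j : ℝ) * r, -L + ((j : ℝ) + 1) * r)

lemma Dg'_eq_singleton (j : ℕ) : Dg' L r j = {dgPoint L r j} := rfl

lemma distDelta_dgPoint (j : ℕ) : distDelta (dgPoint L r j) = r / 2 := by
  simp only [distDelta, dgPoint]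
  ring

variable {L r}

lemma le_dist_dgPoint (hr : 0 ≤ r) {j j' : ℕ} (h : j ≠ j') :
    r ≤ dist (dgPoint L r j) (dgPoint L r j') := by
  have hjj' : 1 ≤ |(j : ℝ) - j'| := by
    rw [le_abs]
    rcases h.lt_or_gt with h | h
    · right; linarith [show (j : ℝ) + 1 ≤ j' by exact_mod_cast h]
    · left; linarith [show (j' : ℝ) + 1 ≤ j by exact_mod_cast h]
  calc r ≤ |(j : ℝ) - j'| * r := le_mul_of_one_le_left hr hjj'
    _ = |((j : ℝ) - j') * r| := by rw [abs_mul, abs_of_nonneg hr]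
    _ = dist (dgPoint L r j).1 (dgPoint L r j').1 := by
      rw [Real.dist_eq, dgPoint, dgPoint]
      ring_nf
    _ ≤ dist (dgPoint L r j) (dgPoint L r j') := le_max_left _ _

lemma diagramDist_zero_Dg' {p : ℕ∞} (hp : 1 ≤ p) (hr : 0 ≤ r) (j : ℕ) :
    diagramDist p 0 (Dg' L r j) = r / 2 := by
  rw [Dg'_eq_singleton, diagramDist_zero_singleton hp (by rw [distDelta_dgPoint]; positivity),
    distDelta_dgPoint]

lemma not_diagramDist_one_Dg'_lt_and_lt {C : Multiset (ℝ × ℝ)}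
    (hC : ∀ c ∈ C, 0 ≤ distDelta c) (hr : 0 ≤ r) {j j' : ℕ} (hjj' : j ≠ j') :
    ¬ (diagramDist 1 C (Dg' L r j) < r / 2 ∧ diagramDist 1 C (Dg' L r j') < r / 2) :=
  not_diagramDist_one_singleton_lt_and_lt (q := dgPoint L r j) (q' := dgPoint L r j') hC
    (distDelta_dgPoint L r j).ge (distDelta_dgPoint L r j').ge
    (by linarith [le_dist_dgPoint (L := L) hr hjj'])

lemma Dg'_mem_DiagNL {N : ℕ} (hN : 1 ≤ N) (hr : 0 < r) {j : ℕ} (hj : ((j : ℝ) + 1) * r ≤ 2 * L) :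
    (Dg' L r j).card ≤ N ∧
      ∀ q ∈ Dg' L r j, q.1 < q.2 ∧ -L ≤ q.1 ∧ q.1 ≤ L ∧ -L ≤ q.2 ∧ q.2 ≤ L := by
  have hj₀ : (0 : ℝ) ≤ j := j.cast_nonneg
  refine ⟨by simpa [Dg'] using hN, fun q hq => ?_⟩
  obtain rfl : q = dgPoint L r j := Multiset.mem_singleton.mp hq
  simp only [dgPoint]
  refine ⟨?_, ?_, ?_, ?_, ?_⟩ <;> nlinarith

end Dg'

theorem cover_of_ball_needs_M_balls_general (N : ℕ) (hN : 1 ≤ N) (L : ℝ) (hL : 0 < L)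
    (M : ℕ) (r : ℝ) (hr : r = 2 * L / M) :
    (∀ p : ℕ∞, 1 ≤ p → ∀ j : ℕ, j < M →
      diagramDist p 0 (Dg' L r j) = r / 2 ∧ r / 2 < r) ∧
    (∀ j j' : ℕ, j < M → j' < M → j ≠ j' →
      ∀ C : DiagNL N L, ¬ (diagramDist 1 C.1 (Dg' L r j) < r / 2 ∧
        diagramDist 1 C.1 (Dg' L r j') < r / 2)) ∧
    (∀ (t : Finset (DiagNL N L)) (ρ : DiagNL N L → ℝ), (∀ c ∈ t, ρ c ≤ r / 2) →
      ballD (fun D D' : DiagNL N L => diagramDist 1 D.1 D'.1) (emptyDiag N L) r ⊆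
        (⋃ c ∈ t, ballD (fun D D' : DiagNL N L => diagramDist 1 D.1 D'.1) c (ρ c)) →
      M ≤ t.card) := by
  have hr_pos {j : ℕ} (hj : j < M) : 0 < r :=
    hr ▸ div_pos (by linarith) (by exact_mod_cast j.zero_le.trans_lt hj)
  have separated : ∀ j j' : ℕ, j < M → j' < M → j ≠ j' → ∀ C : DiagNL N L,
      ¬ (diagramDist 1 C.1 (Dg' L r j) < r / 2 ∧ diagramDist 1 C.1 (Dg' L r j') < r / 2) :=
    fun j _ hj _ hjj' C => not_diagramDist_one_Dg'_lt_and_lt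
      (fun _ => distDelta_nonneg_of_mem C) (hr_pos hj).le hjj'
  refine ⟨fun p hp j hj => ⟨diagramDist_zero_Dg' hp (hr_pos hj).le j, half_lt_self (hr_pos hj)⟩,
    separated, fun t ρ hρ hcover => ?_⟩
  have covered (j : ℕ) (hj : j < M) : ∃ c ∈ t, diagramDist 1 c.1 (Dg' L r j) < ρ c := by
    have hjr : ((j : ℝ) + 1) * r ≤ 2 * L := calc
      ((j : ℝ) + 1) * r = 2 * L * (((j : ℝ) + 1) / M) := by rw [hr]; ring
      _ ≤ 2 * L * 1 := by
        gcongr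
        exact div_le_one_of_le₀ (by exact_mod_cast hj) M.cast_nonneg
      _ = 2 * L := mul_one _
    have hmem : (⟨Dg' L r j, Dg'_mem_DiagNL hN (hr_pos hj) hjr⟩ : DiagNL N L) ∈
        ballD (fun D D' : DiagNL N L => diagramDist 1 D.1 D'.1) (emptyDiag N L) r :=
      (diagramDist_zero_Dg' le_rfl (hr_pos hj).le j).trans_lt (half_lt_self (hr_pos hj))
    obtain ⟨c, hc, hjc⟩ := Set.mem_iUnion₂.mp (hcover hmem)
    exact ⟨c, hc, hjc⟩
  simpa using Finset.card_le_card_of_forall_subsingleton (s := Finset.range M)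
    (fun j (c : DiagNL N L) => diagramDist 1 c.1 (Dg' L r j) < ρ c)
    (fun j hj => covered j (Finset.mem_range.mp hj))
    (fun c hc j hj j' hj' => by_contra fun hjj' => separated j j'
      (Finset.mem_range.mp hj.1) (Finset.mem_range.mp hj'.1) hjj' c
      ⟨hj.2.trans_le (hρ c hc), hj'.2.trans_le (hρ c hc)⟩)

/-- With `r = 2L/M`: each `Dg'_j` (`j < M`) satisfies `d_p(∅, Dg'_j) = r/2 < r` for
every `p ∈ ℕ ∪ {∞}` with `p ≥ 1`; no open `d_1`-ball of radius `r/2` contains two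
distinct diagrams `Dg'_j`, `Dg'_{j'}`; hence any cover of the open ball `B_1(∅, r)`
in `D_N^L` by open balls of radius at most `r/2` requires at least `M` balls. -/
theorem cover_of_ball_needs_M_balls (N : ℕ) (hN : 1 ≤ N) (L : ℝ) (hL : 0 < L)
    (M : ℕ) (hM : 1 ≤ M) (r : ℝ) (hr : r = 2 * L / M) :
    (∀ p : ℕ∞, 1 ≤ p → ∀ j : ℕ, j < M →
      diagramDist p 0 (Dg' L r j) = r / 2 ∧ r / 2 < r) ∧
    (∀ j j' : ℕ, j < M → j' < M → j ≠ j' →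
      ∀ C : DiagNL N L, ¬ (diagramDist 1 C.1 (Dg' L r j) < r / 2 ∧
        diagramDist 1 C.1 (Dg' L r j') < r / 2)) ∧
    (∀ (t : Finset (DiagNL N L)) (ρ : DiagNL N L → ℝ), (∀ c ∈ t, ρ c ≤ r / 2) →
      ballD (fun D D' : DiagNL N L => diagramDist 1 D.1 D'.1) (emptyDiag N L) r ⊆
        (⋃ c ∈ t, ballD (fun D D' : DiagNL N L => diagramDist 1 D.1 D'.1) c (ρ c)) →
      M ≤ t.card) :=
  cover_of_ball_needs_M_balls_general N hN L hL M r hr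

end
end
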